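/- Let c ≥ 1 and let H_1, H_2, H_3, H_4 be complement-connected graphs of the same order c such that for all l ≠ l' the graph H_l is not embeddable into H_{l'}. Define R_0 = {H_1, H_2, H_3, H_4}, and, inductively, for a nonempty set S of isomorphism types from R_{i−1} let G_{i,S} be the complement of the vertex-disjoint union of the graphs in S, and let R_i be the set of isomorphism types of the graphs G_{i,S} with |S| = |R_{i−1}|/2. Then: (1) for any S ⊆ R_{i−1} with |S| ≥ 2, the graph G_{i,S} is a connected inclusion-free uniform graph of rank i; (2) for any S, T ⊆ R_{i−1} with S not a subset of T, the graph G_{i,S} is not embeddable into G_{i,T}; and (3) |R_i| = C(|R_{i−1}|, |R_{i−1}|/2) (in particular each |R_i| is even, so the construction is well defined). -/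

import Mathlib

namespace PaperFO

variable {V : Type}

/-- The adjacency relation at decomposition depth `i`: distinct vertices
`x, y` lying in a common member `F` of the depth-`i` decomposition `Dec^i G`
are adjacent in `F` iff `{x,y} ∈^{i+1} E(G)`, i.e. iff `G.Adj x y ↔ Even i`. -/
def parityAdj (G : SimpleGraph V) (i : ℕ) (x y : V) : Prop :=
  x ≠ y ∧ (G.Adj x y ↔ Even i)

/-- `cellRel G i x y` says that `x` and `y` lie in the same member of the
depth-`i` decomposition `Dec^i G` of `G` (for a connected graph `G`); these
vertex sets are the cells of the partition `P_i` of the paper. -/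
def cellRel (G : SimpleGraph V) : ℕ → V → V → Prop
  | 0 => Relation.ReflTransGen (fun a b => parityAdj G 0 a b)
  | i + 1 => Relation.ReflTransGen (fun a b => cellRel G i a b ∧ parityAdj G (i + 1) a b)

/-- The member of `Dec^i G` containing the vertex `v`, as a graph: the
depth-`i` environment `env_i(v; G)` of `v`. -/
def envGraph (G : SimpleGraph V) (i : ℕ) (v : V) :
    SimpleGraph {u : V // cellRel G i v u} where
  Adj x y := parityAdj G i x.1 y.1
  symm := ⟨fun x y h => ⟨h.1.symm, (G.adj_comm y.1 x.1).trans h.2⟩⟩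
  loopless := ⟨fun x h => h.1 rfl⟩

/-- The rank of a connected graph `G`: the smallest `k` such that the
partition `P_{k+1}` coincides with `P_k` (equivalently, such that `P_k`
consists of the vertex sets of the cocomponents of `G`). -/
noncomputable def rank (G : SimpleGraph V) : ℕ :=
  sInf {k : ℕ | ∀ x y : V, cellRel G (k + 1) x y ↔ cellRel G k x y}

/-- A connected graph `G` of rank `k` is uniform if `Dec^{k-1} G` contains no
complement-connected graph, i.e. every depth-`(k-1)` cell splits further;
every complement-connected graph (rank `0`) is uniform. -/
def Uniform (G : SimpleGraph V) : Prop :=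
  rank G = 0 ∨
    ∀ x : V, ∃ y : V, cellRel G (rank G - 1) x y ∧ ¬ cellRel G (rank G) x y

/-- A connected graph `G` of rank `k` is inclusion-free if for every
`0 ≤ i ≤ k`: (1) for any `K ∈ Dec^i G`, no two distinct connected components
of the complement of `K` are isomorphic; (2) no member of `Dec^i G` is
properly embeddable into another (embeddable implies isomorphic). -/
def InclusionFree (G : SimpleGraph V) : Prop :=
  ∀ i ≤ rank G,
    (∀ x y : V, cellRel G i x y → ¬ cellRel G (i + 1) x y →
      ¬ Nonempty (envGraph G (i + 1) x ≃g envGraph G (i + 1) y)) ∧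
    (∀ x y : V, Nonempty (envGraph G i x ↪g envGraph G i y) →
      Nonempty (envGraph G i x ≃g envGraph G i y))

/-- A graph is complement-connected if both it and its complement are
connected (in particular its vertex set is nonempty). -/
def CoConnected (G : SimpleGraph V) : Prop := G.Connected ∧ (Gᶜ).Connected

/-- A cocomponent of `G`: an inclusion-maximal complement-connected induced
subgraph of `G`, given by its vertex set `S`. -/
def IsCocomponent (G : SimpleGraph V) (S : Set V) : Prop :=
  CoConnected (G.induce S) ∧
    ∀ T : Set V, S ⊆ T → CoConnected (G.induce T) → T = S

end PaperFO

namespace PaperFO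

/-- The disjoint union of an indexed family of graphs. -/
def sigmaGraph {ι : Type} {Vv : ι → Type} (A : ∀ a : ι, SimpleGraph (Vv a)) :
    SimpleGraph (Σ a : ι, Vv a) where
  Adj p q := ∃ h : p.1 = q.1, (A q.1).Adj (h ▸ p.2) q.2
  symm := by
    refine ⟨?_⟩
    rintro ⟨a, x⟩ ⟨b, y⟩ ⟨h, hadj⟩
    cases h
    exact ⟨rfl, hadj.symm⟩
  loopless := by
    refine ⟨?_⟩
    rintro ⟨a, x⟩ ⟨h, hadj⟩
    exact (A a).irrefl hadj

/-- `Gcon A S` is the complement of the vertex-disjoint union of the graphs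
`A a` for `a ∈ S` (the graph `G_{i,S}` of the paper). -/
def Gcon {ι : Type} {Vv : ι → Type} (A : ∀ a : ι, SimpleGraph (Vv a)) (S : Set ι) :
    SimpleGraph {p : Σ a : ι, Vv a | p.1 ∈ S} :=
  ((sigmaGraph A).induce {p : Σ a : ι, Vv a | p.1 ∈ S})ᶜ

end PaperFO

namespace PaperFO

/-- A level of the recursive construction: a finite family of finite graphs
(representing the isomorphism types in `R_i`). -/
structure LevelData : Type 1 where
  ι : Type
  fι : Fintype ι
  dι : DecidableEq ι
  Vv : ι → Type
  fV : ∀ a : ι, Fintype (Vv a)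
  Gr : ∀ a : ι, SimpleGraph (Vv a)

/-- The recursively defined families `R_i` of the paper: `R_0` consists of
the four given graphs `H 0, H 1, H 2, H 3` of order `c`, and `R_{i+1}`
consists of the graphs `G_{i+1,S} = Gcon (R_i) S` for the subsets `S` of
`R_i` of size `|R_i| / 2`. -/
noncomputable def level (c : ℕ) (H : Fin 4 → SimpleGraph (Fin c)) : ℕ → LevelData
  | 0 => ⟨Fin 4, inferInstance, inferInstance, fun _ => Fin c, fun _ => inferInstance, H⟩
  | i + 1 =>
    let L := level c H i
    letI : Fintype L.ι := L.fι
    letI : DecidableEq L.ι := L.dι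
    letI : ∀ a, Fintype (L.Vv a) := L.fV
    { ι := { S : Finset L.ι // 2 * S.card = Fintype.card L.ι }
      fι := Fintype.ofFinite _
      dι := Classical.decEq _
      Vv := fun S => {p : Σ a : L.ι, L.Vv a | p.1 ∈ (S.1 : Set L.ι)}
      fV := fun S => Fintype.ofFinite _
      Gr := fun S => Gcon L.Gr (S.1 : Set L.ι) }

end PaperFO

/-!
For `|S| ≥ 2` the graph `Gcon A S` is connected, and each of its depth-`(j+1)` cells lies in
a single fiber `A a` (`a ∈ S`), where it is a depth-`j` cell of `A a` with the same
environment. So rank, uniformity and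
inclusion-freeness pass from the family `R_{i-1}` to each `G_{i,S}`, provided condition (2)
of inclusion-freeness holds across the whole family, which is the invariant carried by the
induction. An embedding `G_{i,S} ↪ G_{i,T}` maps each connected `A a` into a single `A b`,
impossible for `a ∉ T` since distinct members of `R_{i-1}` do not embed into each other.
The count is that of half-size subsets, and the central binomial coefficient `C(2m, m)` is
even and at least `4` for `m ≥ 2`.
-/

namespace PaperFO

open Relation

section Cells

variable {V : Type} {G : SimpleGraph V}

lemma parityAdj_zero (G : SimpleGraph V) : parityAdj G 0 = G.Adj := by
  ext x y
  simp only [parityAdj, Even.zero, iff_true]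
  exact ⟨And.right, fun h => ⟨h.ne, h⟩⟩

lemma parityAdj_one (G : SimpleGraph V) : parityAdj G 1 = Gᶜ.Adj := by
  ext x y
  simp [parityAdj, SimpleGraph.compl_adj]

lemma cellRel_zero (G : SimpleGraph V) : cellRel G 0 = G.Reachable := by
  ext x y
  rw [SimpleGraph.reachable_iff_reflTransGen, cellRel, parityAdj_zero]

lemma cellRel_one (hG : G.Preconnected) : cellRel G 1 = Gᶜ.Reachable := by
  have hstep : (fun x y => cellRel G 0 x y ∧ parityAdj G 1 x y) = Gᶜ.Adj := by
    ext x y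
    rw [cellRel_zero, parityAdj_one]
    exact and_iff_right (hG x y)
  ext x y
  change ReflTransGen (fun x y => cellRel G 0 x y ∧ parityAdj G 1 x y) x y ↔ _
  rw [hstep, SimpleGraph.reachable_iff_reflTransGen]

lemma cellRel_succ_le (G : SimpleGraph V) (j : ℕ) : cellRel G (j + 1) ≤ cellRel G j := by
  cases j <;> exact reflTransGen_closed fun _ _ h => h.1

lemma cellRel_antitone (G : SimpleGraph V) : Antitone (cellRel G) :=
  antitone_nat_of_succ_le (cellRel_succ_le G)

/-- `rank G` is by definition the least `k` with `IsStable G k`. -/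
def IsStable (G : SimpleGraph V) (k : ℕ) : Prop :=
  ∀ x y : V, cellRel G (k + 1) x y ↔ cellRel G k x y

lemma rank_le_of_isStable {k : ℕ} (h : IsStable G k) : rank G ≤ k := Nat.sInf_le h

lemma rank_eq_of_isStable {k : ℕ} (h : IsStable G k) (hmin : ∀ m < k, ¬ IsStable G m) :
    rank G = k :=
  le_antisymm (rank_le_of_isStable h)
    (le_csInf ⟨k, h⟩ fun m hm => not_lt.mp fun hlt => hmin m hlt hm)

lemma CoConnected.isStable_zero (h : CoConnected G) : IsStable G 0 := by
  intro x y
  change cellRel G 1 x y ↔ cellRel G 0 x y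
  rw [cellRel_one h.1.preconnected, cellRel_zero]
  exact iff_of_true (h.2.preconnected x y) (h.1.preconnected x y)

lemma CoConnected.rank_eq_zero (h : CoConnected G) : rank G = 0 :=
  Nat.le_zero.mp (rank_le_of_isStable h.isStable_zero)

def envGraphZeroIso (hG : G.Preconnected) (x : V) : envGraph G 0 x ≃g G where
  toEquiv := Equiv.subtypeUnivEquiv fun y => by rw [cellRel_zero]; exact hG x y
  map_rel_iff' {y z} := by
    change G.Adj y.1 z.1 ↔ parityAdj G 0 y.1 z.1
    rw [parityAdj_zero]

lemma CoConnected.inclusionFree (h : CoConnected G) : InclusionFree G := by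
  intro j hj
  rw [h.rank_eq_zero, Nat.le_zero] at hj
  subst hj
  exact ⟨fun x y hxy hnot => absurd ((h.isStable_zero x y).mpr hxy) hnot,
    fun x y _ => ⟨(envGraphZeroIso h.1.preconnected x).trans
      (envGraphZeroIso h.1.preconnected y).symm⟩⟩

end Cells

section Transport

variable {V₁ V₂ W₁ W₂ : Type} {G₁ : SimpleGraph V₁} {G₂ : SimpleGraph V₂}
  {H₁ : SimpleGraph W₁} {H₂ : SimpleGraph W₂}

lemma nonempty_embedding_congr (e₁ : G₁ ≃g H₁) (e₂ : G₂ ≃g H₂) :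
    Nonempty (G₁ ↪g G₂) ↔ Nonempty (H₁ ↪g H₂) :=
  Nonempty.congr (fun f => e₂.toEmbedding.comp (f.comp e₁.symm.toEmbedding))
    (fun f => e₂.symm.toEmbedding.comp (f.comp e₁.toEmbedding))

lemma nonempty_iso_congr (e₁ : G₁ ≃g H₁) (e₂ : G₂ ≃g H₂) :
    Nonempty (G₁ ≃g G₂) ↔ Nonempty (H₁ ≃g H₂) :=
  Nonempty.congr (fun f => e₂.comp (f.comp e₁.symm)) (fun f => e₂.symm.comp (f.comp e₁))

end Transport

lemma reflTransGen_map_iff {α β : Type} {r : α → α → Prop} {s : β → β → Prop} {f : α → β}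
    (hf : Function.Injective f) (hrs : ∀ u v, s (f u) (f v) ↔ r u v)
    (hclosed : ∀ u y, s (f u) y → ∃ v, f v = y) (u v : α) :
    ReflTransGen s (f u) (f v) ↔ ReflTransGen r u v := by
  refine ⟨fun h => ?_, fun h => ReflTransGen.lift f (fun a b h => (hrs a b).mpr h) u v h⟩
  suffices ∀ y, ReflTransGen s (f u) y → ∃ w, f w = y ∧ ReflTransGen r u w by
    obtain ⟨w, hw, huw⟩ := this _ h
    rwa [← hf hw]
  intro y hy
  induction hy with
  | refl => exact ⟨u, rfl, .refl⟩
  | tail _ hstep ih =>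
    obtain ⟨w, rfl, huw⟩ := ih
    obtain ⟨w', rfl⟩ := hclosed w _ hstep
    exact ⟨w', rfl, huw.tail ((hrs w w').mp hstep)⟩

section Gcon

variable {ι : Type} {Vv : ι → Type} (A : ∀ a : ι, SimpleGraph (Vv a)) {S : Set ι}

def sigmaIncl (a : ι) : A a ↪g sigmaGraph A where
  toFun u := ⟨a, u⟩
  inj' := sigma_mk_injective
  map_rel_iff' := ⟨fun ⟨_, h⟩ => h, fun h => ⟨rfl, h⟩⟩

def fiberVert {a : ι} (ha : a ∈ S) (u : Vv a) : {p : Σ b : ι, Vv b | p.1 ∈ S} := ⟨⟨a, u⟩, ha⟩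

lemma fiberVert_injective {a : ι} (ha : a ∈ S) : Function.Injective (fiberVert (Vv := Vv) ha) :=
  fun _ _ h => sigma_mk_injective (congrArg Subtype.val h)

lemma exists_fiberVert_eq {a : ι} (ha : a ∈ S) {x : {p : Σ b : ι, Vv b | p.1 ∈ S}}
    (h : a = x.1.1) : ∃ v, fiberVert ha v = x := by
  obtain ⟨⟨b, v⟩, hb⟩ := x
  subst h
  exact ⟨v, rfl⟩

lemma gcon_adj {x y : {p : Σ b : ι, Vv b | p.1 ∈ S}} :
    (Gcon A S).Adj x y ↔ x ≠ y ∧ ¬ (sigmaGraph A).Adj x.1 y.1 := Iff.rfl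

lemma gcon_adj_of_fst_ne {x y : {p : Σ b : ι, Vv b | p.1 ∈ S}} (h : x.1.1 ≠ y.1.1) :
    (Gcon A S).Adj x y :=
  ⟨fun hxy => h (by rw [hxy]), fun hadj => h hadj.1⟩

lemma parityAdj_gcon_fiberVert {a : ι} (ha : a ∈ S) (j : ℕ) (u v : Vv a) :
    parityAdj (Gcon A S) (j + 1) (fiberVert ha u) (fiberVert ha v) ↔ parityAdj (A a) j u v := by
  have hadj : (sigmaGraph A).Adj (fiberVert ha u).1 (fiberVert ha v).1 ↔ (A a).Adj u v :=
    (sigmaIncl A a).map_rel_iff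
  simp only [parityAdj, gcon_adj, (fiberVert_injective ha).ne_iff, hadj, Nat.even_add_one]
  tauto

lemma fst_eq_of_cellRel_succ (j : ℕ) {x y : {p : Σ b : ι, Vv b | p.1 ∈ S}}
    (h : cellRel (Gcon A S) (j + 1) x y) : x.1.1 = y.1.1 := by
  have h1 : ReflTransGen (fun x y => cellRel (Gcon A S) 0 x y ∧ parityAdj (Gcon A S) 1 x y) x y :=
    cellRel_antitone _ (Nat.le_add_left 1 j) x y h
  clear h
  induction h1 with
  | refl => rfl
  | tail _ hstep ih =>
    refine ih.trans (by_contra fun hne => ?_)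
    exact Nat.not_even_one (hstep.2.2.mp (gcon_adj_of_fst_ne A hne))

lemma not_cellRel_gcon_of_fst_ne {j : ℕ} {x y : {p : Σ b : ι, Vv b | p.1 ∈ S}}
    (h : x.1.1 ≠ y.1.1) : ¬ cellRel (Gcon A S) (j + 1) x y :=
  fun hc => h (fst_eq_of_cellRel_succ A j hc)

lemma gcon_preconnected (hne : ∀ a ∈ S, Nonempty (Vv a)) (hS : S.Nontrivial) :
    (Gcon A S).Preconnected := by
  intro x y
  by_cases hxy : x.1.1 = y.1.1
  · obtain ⟨b, hb, hbx⟩ := hS.exists_ne x.1.1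
    obtain ⟨w⟩ := hne b hb
    exact (gcon_adj_of_fst_ne A (y := fiberVert hb w) hbx.symm).reachable.trans
      (gcon_adj_of_fst_ne A (hxy ▸ hbx)).reachable
  · exact (gcon_adj_of_fst_ne A hxy).reachable

lemma gcon_connected (hne : ∀ a ∈ S, Nonempty (Vv a)) (hS : S.Nontrivial) :
    (Gcon A S).Connected := by
  obtain ⟨a, ha⟩ := hS.nonempty
  obtain ⟨u⟩ := hne a ha
  have : Nonempty {p : Σ b : ι, Vv b | p.1 ∈ S} := ⟨fiberVert ha u⟩
  exact ⟨gcon_preconnected A hne hS⟩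

lemma cellRel_gcon_fiberVert (hpc : (Gcon A S).Preconnected) {a : ι} (ha : a ∈ S) (j : ℕ)
    (u v : Vv a) :
    cellRel (Gcon A S) (j + 1) (fiberVert ha u) (fiberVert ha v) ↔ cellRel (A a) j u v := by
  induction j generalizing u v with
  | zero =>
    refine reflTransGen_map_iff (fiberVert_injective ha) (fun p q => ?_)
      (fun p y h => exists_fiberVert_eq ha (fst_eq_of_cellRel_succ A 0 (.single h))) u v
    rw [parityAdj_gcon_fiberVert]
    exact and_iff_right (by rw [cellRel_zero]; exact hpc _ _)
  | succ j ih =>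
    refine reflTransGen_map_iff (fiberVert_injective ha) (fun p q => ?_)
      (fun p y h => exists_fiberVert_eq ha (fst_eq_of_cellRel_succ A (j + 1) (.single h))) u v
    rw [parityAdj_gcon_fiberVert, ih]

noncomputable def envGraphGconIso (hpc : (Gcon A S).Preconnected) {a : ι} (ha : a ∈ S) (j : ℕ)
    (u : Vv a) : envGraph (Gcon A S) (j + 1) (fiberVert ha u) ≃g envGraph (A a) j u := by
  let g : {v // cellRel (A a) j u v} → {y // cellRel (Gcon A S) (j + 1) (fiberVert ha u) y} :=
    fun v => ⟨fiberVert ha v.1, (cellRel_gcon_fiberVert A hpc ha j u v.1).mpr v.2⟩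
  have hg : Function.Bijective g := by
    refine ⟨fun p q hpq => Subtype.ext (fiberVert_injective ha (congrArg Subtype.val hpq)), ?_⟩
    rintro ⟨y, hy⟩
    obtain ⟨v, rfl⟩ := exists_fiberVert_eq ha (fst_eq_of_cellRel_succ A j hy)
    exact ⟨⟨v, (cellRel_gcon_fiberVert A hpc ha j u v).mp hy⟩, rfl⟩
  exact (RelIso.mk (Equiv.ofBijective g hg)
    fun {p q} => parityAdj_gcon_fiberVert A ha j p.1 q.1).symm

lemma gcon_isStable_succ_iff (hpc : (Gcon A S).Preconnected) (k : ℕ) :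
    IsStable (Gcon A S) (k + 1) ↔ ∀ a ∈ S, IsStable (A a) k := by
  constructor
  · intro h a ha u v
    have := h (fiberVert ha u) (fiberVert ha v)
    rwa [cellRel_gcon_fiberVert A hpc ha, cellRel_gcon_fiberVert A hpc ha] at this
  · rintro h ⟨⟨a, u⟩, (ha : a ∈ S)⟩ ⟨⟨b, v⟩, (hb : b ∈ S)⟩
    obtain rfl | hab := eq_or_ne a b
    · exact (cellRel_gcon_fiberVert A hpc ha (k + 1) u v).trans
        ((h a ha u v).trans (cellRel_gcon_fiberVert A hpc ha k u v).symm)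
    · exact iff_of_false (not_cellRel_gcon_of_fst_ne A hab) (not_cellRel_gcon_of_fst_ne A hab)

lemma gcon_not_isStable_zero (hne : ∀ a ∈ S, Nonempty (Vv a)) (hS : S.Nontrivial) :
    ¬ IsStable (Gcon A S) 0 := by
  obtain ⟨a, ha, b, hb, hab⟩ := id hS
  obtain ⟨u⟩ := hne a ha
  obtain ⟨v⟩ := hne b hb
  refine fun h => not_cellRel_gcon_of_fst_ne A (x := fiberVert ha u) (y := fiberVert hb v) hab
    ((h _ _).mpr ?_)
  rw [cellRel_zero]
  exact gcon_preconnected A hne hS _ _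

end Gcon

section Embedding

variable {ι : Type} {Vv : ι → Type} {A : ∀ a : ι, SimpleGraph (Vv a)} {S T : Set ι}

lemma sigmaGraph_adj_sigmaSubtype {b : ι} (p q : {p : Σ a : ι, Vv a // p.1 = b}) :
    (A b).Adj (Equiv.sigmaSubtype b p) (Equiv.sigmaSubtype b q) ↔ (sigmaGraph A).Adj p.1 q.1 := by
  obtain ⟨⟨a, u⟩, hp⟩ := p
  obtain ⟨⟨a', v⟩, hq⟩ := q
  cases hp
  cases hq
  exact (sigmaIncl A a).map_rel_iff.symm

lemma exists_embedding_fiber_of_connected {W : Type} {G : SimpleGraph W} (hG : G.Connected)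
    (φ : G ↪g sigmaGraph A) : ∃ b, (∀ w, (φ w).1 = b) ∧ Nonempty (G ↪g A b) := by
  obtain ⟨w₀⟩ := hG.nonempty
  have hconst : ∀ w, (φ w).1 = (φ w₀).1 := by
    intro w
    obtain ⟨p⟩ := hG.preconnected w w₀
    induction p with
    | nil => rfl
    | cons h _ ih => exact (φ.map_rel_iff.mpr h).1.trans ih
  refine ⟨(φ w₀).1, hconst, ⟨{
    toFun := fun w => Equiv.sigmaSubtype _ ⟨φ w, hconst w⟩
    inj' := fun w w' h => φ.injective (congrArg Subtype.val ((Equiv.sigmaSubtype _).injective h))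
    map_rel_iff' := (sigmaGraph_adj_sigmaSubtype _ _).trans φ.map_rel_iff }⟩⟩

lemma sigmaGraph_adj_iff_not_gcon_adj {x y : {p : Σ b : ι, Vv b | p.1 ∈ S}} (hxy : x ≠ y) :
    (sigmaGraph A).Adj x.1 y.1 ↔ ¬ (Gcon A S).Adj x y := by
  rw [gcon_adj]
  tauto

def gconEmbeddingFiber (f : Gcon A S ↪g Gcon A T) {a : ι} (ha : a ∈ S) :
    A a ↪g sigmaGraph A where
  toFun u := (f (fiberVert ha u)).1
  inj' := Subtype.val_injective.comp (f.injective.comp (fiberVert_injective ha))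
  map_rel_iff' {u v} := by
    rw [← (sigmaIncl A a).map_rel_iff]
    obtain rfl | huv := eq_or_ne u v
    · exact iff_of_false ((sigmaGraph A).irrefl) ((sigmaGraph A).irrefl)
    · have hne := (fiberVert_injective ha).ne huv
      exact (sigmaGraph_adj_iff_not_gcon_adj (f.injective.ne hne)).trans
        (f.map_rel_iff.not.trans (sigmaGraph_adj_iff_not_gcon_adj hne).symm)

/-- Non-adjacency in `Gcon A S` is adjacency in the disjoint union, so an embedding
`Gcon A S ↪g Gcon A T` maps the connected graph `A a` into a single `A b` with `b ∈ T`. -/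
lemma not_nonempty_gcon_embedding {a : ι} (ha : a ∈ S) (hconn : (A a).Connected)
    (hemb : ∀ b ∈ T, ¬ Nonempty (A a ↪g A b)) : ¬ Nonempty (Gcon A S ↪g Gcon A T) := by
  rintro ⟨f⟩
  obtain ⟨u⟩ := hconn.nonempty
  obtain ⟨b, hb, he⟩ := exists_embedding_fiber_of_connected hconn (gconEmbeddingFiber f ha)
  exact hemb b (hb u ▸ (f (fiberVert ha u)).2) he

lemma envGraph_zero_iso_of_embedding (hconn : ∀ a, (A a).Preconnected)
    (hemb : ∀ a b, a ≠ b → ¬ Nonempty (A a ↪g A b)) {a b : ι} (u : Vv a) (v : Vv b)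
    (h : Nonempty (envGraph (A a) 0 u ↪g envGraph (A b) 0 v)) :
    Nonempty (envGraph (A a) 0 u ≃g envGraph (A b) 0 v) := by
  obtain rfl | hab := eq_or_ne a b
  · exact ⟨(envGraphZeroIso (hconn a) u).trans (envGraphZeroIso (hconn a) v).symm⟩
  · exact absurd ((nonempty_embedding_congr (envGraphZeroIso (hconn a) u)
      (envGraphZeroIso (hconn b) v)).mp h) (hemb a b hab)

end Embedding

section Family

variable {ι : Type} {Vv : ι → Type}

structure InclusionFreeFamily (A : ∀ a : ι, SimpleGraph (Vv a)) (i : ℕ) : Prop where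
  connected : ∀ a, (A a).Connected
  isStable : ∀ a, IsStable (A a) i
  rank_eq : ∀ a, rank (A a) = i
  uniform : ∀ a, Uniform (A a)
  inclusionFree : ∀ a, InclusionFree (A a)
  envGraph_iso_of_embedding : ∀ a b, ∀ j ≤ i, ∀ (u : Vv a) (v : Vv b),
    Nonempty (envGraph (A a) j u ↪g envGraph (A b) j v) →
      Nonempty (envGraph (A a) j u ≃g envGraph (A b) j v)
  not_embedding : ∀ a b, a ≠ b → ¬ Nonempty (A a ↪g A b)

lemma InclusionFreeFamily.of_coConnected {A : ∀ a : ι, SimpleGraph (Vv a)}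
    (hcc : ∀ a, CoConnected (A a)) (hemb : ∀ a b, a ≠ b → ¬ Nonempty (A a ↪g A b)) :
    InclusionFreeFamily A 0 where
  connected a := (hcc a).1
  isStable a := (hcc a).isStable_zero
  rank_eq a := (hcc a).rank_eq_zero
  uniform a := Or.inl (hcc a).rank_eq_zero
  inclusionFree a := (hcc a).inclusionFree
  envGraph_iso_of_embedding a b j hj u v := by
    obtain rfl := Nat.le_zero.mp hj
    exact envGraph_zero_iso_of_embedding (fun a => (hcc a).1.preconnected) hemb u v
  not_embedding := hemb

namespace InclusionFreeFamily

variable {A : ∀ a : ι, SimpleGraph (Vv a)} {i : ℕ} {S T : Set ι}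

lemma gcon_connected (hA : InclusionFreeFamily A i) (hS : S.Nontrivial) :
    (Gcon A S).Connected :=
  PaperFO.gcon_connected A (fun a _ => (hA.connected a).nonempty) hS

lemma gcon_rank (hA : InclusionFreeFamily A i) (hS : S.Nontrivial) :
    rank (Gcon A S) = i + 1 := by
  have hpc := (hA.gcon_connected hS).preconnected
  refine rank_eq_of_isStable ((gcon_isStable_succ_iff A hpc i).mpr fun a _ => hA.isStable a)
    fun m hm hstab => ?_
  obtain _ | k := m
  · exact gcon_not_isStable_zero A (fun a _ => (hA.connected a).nonempty) hS hstab
  · obtain ⟨a, ha⟩ := hS.nonempty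
    have := rank_le_of_isStable ((gcon_isStable_succ_iff A hpc k).mp hstab a ha)
    rw [hA.rank_eq a] at this
    omega

lemma gcon_uniform (hA : InclusionFreeFamily A i) (hS : S.Nontrivial) :
    Uniform (Gcon A S) := by
  have hpc := (hA.gcon_connected hS).preconnected
  right
  rw [hA.gcon_rank hS, Nat.add_sub_cancel]
  rintro ⟨⟨a, u⟩, (ha : a ∈ S)⟩
  cases i with
  | zero =>
    obtain ⟨b, hb, hba⟩ := hS.exists_ne a
    obtain ⟨w⟩ := (hA.connected b).nonempty
    refine ⟨fiberVert hb w, ?_, not_cellRel_gcon_of_fst_ne A hba.symm⟩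
    rw [cellRel_zero]
    exact hpc _ _
  | succ k =>
    obtain ⟨v, hv, hnv⟩ := (hA.uniform a).resolve_left (by rw [hA.rank_eq a]; omega) u
    rw [hA.rank_eq a] at hv hnv
    rw [Nat.add_sub_cancel] at hv
    exact ⟨fiberVert ha v, (cellRel_gcon_fiberVert A hpc ha k u v).mpr hv,
      fun h => hnv ((cellRel_gcon_fiberVert A hpc ha (k + 1) u v).mp h)⟩

lemma gcon_envGraph_not_iso (hA : InclusionFreeFamily A i) (hS : S.Nontrivial) {j : ℕ}
    (hj : j ≤ i + 1) (x y : {p : Σ b : ι, Vv b | p.1 ∈ S}) (hxy : cellRel (Gcon A S) j x y)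
    (hnot : ¬ cellRel (Gcon A S) (j + 1) x y) :
    ¬ Nonempty (envGraph (Gcon A S) (j + 1) x ≃g envGraph (Gcon A S) (j + 1) y) := by
  have hpc := (hA.gcon_connected hS).preconnected
  obtain ⟨⟨a, u⟩, (ha : a ∈ S)⟩ := x
  obtain ⟨⟨b, v⟩, (hb : b ∈ S)⟩ := y
  rintro ⟨e⟩
  cases j with
  | zero =>
    obtain rfl | hab := eq_or_ne a b
    · refine hnot ((cellRel_gcon_fiberVert A hpc ha 0 u v).mpr ?_)
      rw [cellRel_zero]
      exact (hA.connected a).preconnected u v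
    · have eu := (envGraphGconIso A hpc ha 0 u).trans
        (envGraphZeroIso (hA.connected a).preconnected u)
      have ev := (envGraphGconIso A hpc hb 0 v).trans
        (envGraphZeroIso (hA.connected b).preconnected v)
      exact hA.not_embedding a b hab ⟨(eu.symm.trans (e.trans ev)).toRelEmbedding⟩
  | succ k =>
    obtain rfl : a = b := fst_eq_of_cellRel_succ A k hxy
    refine ((hA.inclusionFree a) k (by rw [hA.rank_eq a]; omega)).1 u v
      ((cellRel_gcon_fiberVert A hpc ha k u v).mp hxy)
      (fun h => hnot ((cellRel_gcon_fiberVert A hpc ha (k + 1) u v).mpr h)) ?_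
    exact ⟨(envGraphGconIso A hpc ha (k + 1) u).symm.trans
      (e.trans (envGraphGconIso A hpc hb (k + 1) v))⟩

lemma gcon_envGraph_iso_of_embedding (hA : InclusionFreeFamily A i)
    (hpcS : (Gcon A S).Preconnected) (hpcT : (Gcon A T).Preconnected) {k : ℕ} (hk : k ≤ i)
    (x : {p : Σ b : ι, Vv b | p.1 ∈ S}) (y : {p : Σ b : ι, Vv b | p.1 ∈ T})
    (h : Nonempty (envGraph (Gcon A S) (k + 1) x ↪g envGraph (Gcon A T) (k + 1) y)) :
    Nonempty (envGraph (Gcon A S) (k + 1) x ≃g envGraph (Gcon A T) (k + 1) y) := by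
  obtain ⟨⟨a, u⟩, (ha : a ∈ S)⟩ := x
  obtain ⟨⟨b, v⟩, (hb : b ∈ T)⟩ := y
  have eu := envGraphGconIso A hpcS ha k u
  have ev := envGraphGconIso A hpcT hb k v
  exact (nonempty_iso_congr eu ev).mpr
    (hA.envGraph_iso_of_embedding a b k hk u v ((nonempty_embedding_congr eu ev).mp h))

lemma gcon_inclusionFree (hA : InclusionFreeFamily A i) (hS : S.Nontrivial) :
    InclusionFree (Gcon A S) := by
  have hpc := (hA.gcon_connected hS).preconnected
  intro j hj
  rw [hA.gcon_rank hS] at hj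
  refine ⟨hA.gcon_envGraph_not_iso hS hj, fun x y h => ?_⟩
  cases j with
  | zero => exact ⟨(envGraphZeroIso hpc x).trans (envGraphZeroIso hpc y).symm⟩
  | succ k => exact hA.gcon_envGraph_iso_of_embedding hpc hpc (by omega) x y h

lemma gcon_not_embedding (hA : InclusionFreeFamily A i) (h : ¬ S ⊆ T) :
    ¬ Nonempty (Gcon A S ↪g Gcon A T) := by
  obtain ⟨a, haS, haT⟩ := Set.not_subset.mp h
  exact not_nonempty_gcon_embedding haS (hA.connected a)
    fun b hb => hA.not_embedding a b fun hab => haT (hab ▸ hb)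

theorem gcon {κ : Type} (hA : InclusionFreeFamily A i) (F : κ → Set ι)
    (hF : ∀ s, (F s).Nontrivial) (hFsub : ∀ s t, s ≠ t → ¬ F s ⊆ F t) :
    InclusionFreeFamily (fun s => Gcon A (F s)) (i + 1) := by
  have hpc s := (hA.gcon_connected (hF s)).preconnected
  have hemb s t (hst : s ≠ t) := hA.gcon_not_embedding (hFsub s t hst)
  refine
    { connected := fun s => hA.gcon_connected (hF s)
      isStable := fun s => (gcon_isStable_succ_iff A (hpc s) i).mpr fun a _ => hA.isStable a
      rank_eq := fun s => hA.gcon_rank (hF s)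
      uniform := fun s => hA.gcon_uniform (hF s)
      inclusionFree := fun s => hA.gcon_inclusionFree (hF s)
      envGraph_iso_of_embedding := fun s t j hj x y h => ?_
      not_embedding := hemb }
  cases j with
  | zero => exact envGraph_zero_iso_of_embedding hpc hemb x y h
  | succ k => exact hA.gcon_envGraph_iso_of_embedding (hpc s) (hpc t) (by omega) x y h

end InclusionFreeFamily

end Family

lemma card_halfSubsets {α : Type} [Fintype α]
    [Fintype {S : Finset α // 2 * S.card = Fintype.card α}] (h : 2 ∣ Fintype.card α) :
    Fintype.card {S : Finset α // 2 * S.card = Fintype.card α} =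
      (Fintype.card α).choose (Fintype.card α / 2) := by
  rw [Fintype.card_congr (Equiv.subtypeEquivRight
    (q := fun S : Finset α => S.card = Fintype.card α / 2) fun S => by omega),
    Fintype.card_finset_len]

lemma two_dvd_choose_half {n : ℕ} (h : 2 ∣ n) (hn : 0 < n) : 2 ∣ n.choose (n / 2) := by
  obtain ⟨m, rfl⟩ := h
  rw [Nat.mul_div_cancel_left m two_pos, ← Nat.centralBinom_eq_two_mul_choose]
  exact Nat.two_dvd_centralBinom_of_one_le (by omega)

lemma four_le_choose_half {n : ℕ} (h : 4 ≤ n) : 4 ≤ n.choose (n / 2) :=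
  h.trans (by simpa using Nat.choose_le_middle 1 n)

section Level

variable (c : ℕ) (H : Fin 4 → SimpleGraph (Fin c))

lemma card_level_succ (i : ℕ) (h : 2 ∣ @Fintype.card _ (level c H i).fι) :
    @Fintype.card _ (level c H (i + 1)).fι =
      (@Fintype.card _ (level c H i).fι).choose (@Fintype.card _ (level c H i).fι / 2) :=
  @card_halfSubsets _ (level c H i).fι (level c H (i + 1)).fι h

lemma two_dvd_and_four_le_card_level (i : ℕ) :
    2 ∣ @Fintype.card _ (level c H i).fι ∧ 4 ≤ @Fintype.card _ (level c H i).fι := by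
  induction i with
  | zero => exact ⟨⟨2, rfl⟩, le_rfl⟩
  | succ i ih =>
    rw [card_level_succ c H i ih.1]
    exact ⟨two_dvd_choose_half ih.1 (by omega), four_le_choose_half ih.2⟩

lemma inclusionFreeFamily_level (hcc : ∀ l, CoConnected (H l))
    (hemb : ∀ l l', l ≠ l' → ¬ Nonempty (H l ↪g H l')) (i : ℕ) :
    InclusionFreeFamily (level c H i).Gr i := by
  induction i with
  | zero => exact InclusionFreeFamily.of_coConnected hcc hemb
  | succ i ih =>
    have h4 := (two_dvd_and_four_le_card_level c H i).2
    refine ih.gcon (κ := (level c H (i + 1)).ι) (fun S => (S.1 : Set (level c H i).ι))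
      (fun S => Finset.one_lt_card_iff_nontrivial.mp (show 1 < S.1.card by have := S.2; omega))
      (fun S T hST hsub => hST (Subtype.ext (Finset.eq_of_subset_of_card_le
        (Finset.coe_subset.mp hsub) (by have := S.2; have := T.2; omega))))

end Level

theorem statement_8_general (c : ℕ) (H : Fin 4 → SimpleGraph (Fin c))
    (hcc : ∀ l : Fin 4, CoConnected (H l))
    (hemb : ∀ l l' : Fin 4, l ≠ l' → ¬ Nonempty (H l ↪g H l'))
    (i : ℕ) :
    (∀ S : Finset (level c H i).ι, 2 ≤ S.card →
      (Gcon (level c H i).Gr (S : Set (level c H i).ι)).Connected ∧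
        InclusionFree (Gcon (level c H i).Gr (S : Set (level c H i).ι)) ∧
        Uniform (Gcon (level c H i).Gr (S : Set (level c H i).ι)) ∧
        rank (Gcon (level c H i).Gr (S : Set (level c H i).ι)) = i + 1) ∧
    (∀ S T : Finset (level c H i).ι, S.Nonempty → T.Nonempty → ¬ S ⊆ T →
      ¬ Nonempty (Gcon (level c H i).Gr (S : Set (level c H i).ι) ↪g
        Gcon (level c H i).Gr (T : Set (level c H i).ι))) ∧
    (∀ S T : (level c H (i + 1)).ι, S ≠ T →
      ¬ Nonempty ((level c H (i + 1)).Gr S ≃g (level c H (i + 1)).Gr T)) ∧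
    @Fintype.card (level c H (i + 1)).ι (level c H (i + 1)).fι =
      Nat.choose (@Fintype.card (level c H i).ι (level c H i).fι)
        (@Fintype.card (level c H i).ι (level c H i).fι / 2) := by
  have hA := inclusionFreeFamily_level c H hcc hemb i
  refine ⟨fun S hS => ?_, fun S T _ _ hST => hA.gcon_not_embedding (mod_cast hST),
    fun S T hST ⟨e⟩ => ?_, card_level_succ c H i (two_dvd_and_four_le_card_level c H i).1⟩
  · have hS' : (S : Set (level c H i).ι).Nontrivial := Finset.one_lt_card_iff_nontrivial.mp hS
    exact ⟨hA.gcon_connected hS', hA.gcon_inclusionFree hS', hA.gcon_uniform hS',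
      hA.gcon_rank hS'⟩
  · exact (inclusionFreeFamily_level c H hcc hemb (i + 1)).not_embedding S T hST
      ⟨e.toEmbedding⟩

theorem statement_8 (c : ℕ) (hc : 1 ≤ c) (H : Fin 4 → SimpleGraph (Fin c))
    (hcc : ∀ l : Fin 4, CoConnected (H l))
    (hemb : ∀ l l' : Fin 4, l ≠ l' → ¬ Nonempty (H l ↪g H l'))
    (i : ℕ) :
    (∀ S : Finset (level c H i).ι, 2 ≤ S.card →
      (Gcon (level c H i).Gr (S : Set (level c H i).ι)).Connected ∧
        InclusionFree (Gcon (level c H i).Gr (S : Set (level c H i).ι)) ∧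
        Uniform (Gcon (level c H i).Gr (S : Set (level c H i).ι)) ∧
        rank (Gcon (level c H i).Gr (S : Set (level c H i).ι)) = i + 1) ∧
    (∀ S T : Finset (level c H i).ι, S.Nonempty → T.Nonempty → ¬ S ⊆ T →
      ¬ Nonempty (Gcon (level c H i).Gr (S : Set (level c H i).ι) ↪g
        Gcon (level c H i).Gr (T : Set (level c H i).ι))) ∧
    (∀ S T : (level c H (i + 1)).ι, S ≠ T →
      ¬ Nonempty ((level c H (i + 1)).Gr S ≃g (level c H (i + 1)).Gr T)) ∧
    @Fintype.card (level c H (i + 1)).ι (level c H (i + 1)).fι =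
      Nat.choose (@Fintype.card (level c H i).ι (level c H i).fι)
        (@Fintype.card (level c H i).ι (level c H i).fι / 2) :=
  statement_8_general c H hcc hemb i

end PaperFO
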